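/- arXiv:2209.06483 — 5 statements merged into one kernel-verified Lean document; each statement's English description precedes it below -/
import Mathlib

section
/- Under the assumptions |x_i − y_i| ≤ R_i and |x_i − y_j| ≥ 7|x_i − x_j|/8 for j ≠ i, where R_i = (min_j |γ_j^c| · min_{j≠i} |x_i − x_j|) / (8(N−1) max_j(|γ_j^c|, |γ_j|)), one has |γ_i^c| / |x_i − y_i| ≥ (56/15) Σ_{j≠i} (|γ_j| / |x_i − x_j| + |γ_j^c| / |x_i − y_j|). -/
noncomputable section

abbrev E2 := EuclideanSpace ℝ (Fin 2)

/-- Rotation of a planar vector by π/2. -/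
def perp (w : E2) : E2 := (WithLp.equiv 2 (Fin 2 → ℝ)).symm ![-w 1, w 0]

/-!
Every strength is at most `M = max_j max(|γ_j^c|, |γ_j|)`, every distance `|x_i - x_j|` is at
least `d = min_{j ≠ i} |x_i - x_j|`, and `|x_i - y_j| ≥ 7d/8`; so each of the `N - 1` terms of the
sum is at most `M/d + 8M/(7d) = (15/7) M/d`, and the right-hand side is at most
`8 (N - 1) M / d = min_j |γ_j^c| / R ≤ |γ_i^c| / |x_i - y_i|`.
Positivity of `R`, forced by `0 < |x_i - y_i| ≤ R`, supplies `d > 0` and `min_j |γ_j^c| ≠ 0`.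
-/

open Finset

theorem div_add_div_le_of_le {a b r t M d c : ℝ} (hM : 0 ≤ M) (hd : 0 < d) (hc : 0 < c)
    (ha : a ≤ M) (hb : b ≤ M) (hr : d ≤ r) (ht : c * r ≤ t) :
    a / r + b / t ≤ (1 + c⁻¹) * (M / d) := by
  have hcd : 0 < c * d := mul_pos hc hd
  calc a / r + b / t ≤ M / d + M / (c * d) :=
        add_le_add (div_le_div₀ hM ha hd hr)
          (div_le_div₀ hM hb hcd ((mul_le_mul_of_nonneg_left hr hc.le).trans ht))
    _ = (1 + c⁻¹) * (M / d) := by field_simp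

theorem sum_div_add_div_le {ι : Type*} (s : Finset ι) {a b r t : ι → ℝ} {M d c : ℝ}
    (hM : 0 ≤ M) (hd : 0 < d) (hc : 0 < c) (ha : ∀ j ∈ s, a j ≤ M) (hb : ∀ j ∈ s, b j ≤ M)
    (hr : ∀ j ∈ s, d ≤ r j) (ht : ∀ j ∈ s, c * r j ≤ t j) :
    ∑ j ∈ s, (a j / r j + b j / t j) ≤ #s * ((1 + c⁻¹) * (M / d)) := by
  simpa only [nsmul_eq_mul] using sum_le_card_nsmul s _ _ fun j hj =>
    div_add_div_le_of_le hM hd hc (ha j hj) (hb j hj) (hr j hj) (ht j hj)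

theorem Fin.cast_card_univ_erase {K : Type*} [AddGroupWithOne K] {N : ℕ} (i : Fin N) :
    (#(univ.erase i) : K) = N - 1 := by
  rw [card_erase_of_mem (mem_univ i), card_univ, Fintype.card_fin,
    Nat.cast_sub (Nat.one_le_of_lt i.is_lt), Nat.cast_one]

open Finset in
theorem stmt_5_general (N : ℕ) (x y : Fin N → E2)
    (γ γc : Fin N → ℝ)
    (i : Fin N)
    (hne : Finset.univ.Nonempty (α := Fin N))
    (hne' : (Finset.univ.erase i).Nonempty)
    (hyi : y i ≠ x i)
    (R : ℝ)
    (hR : R = ((Finset.univ.inf' hne fun j => |γc j|) *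
        ((Finset.univ.erase i).inf' hne' fun j => ‖x i - x j‖)) /
        (8 * (N - 1 : ℝ) * (Finset.univ.sup' hne fun j => max |γc j| |γ j|)))
    (h1 : ‖x i - y i‖ ≤ R)
    (h2 : ∀ j ∈ Finset.univ.erase i, ‖x i - y j‖ ≥ 7 / 8 * ‖x i - x j‖) :
    |γc i| / ‖x i - y i‖ ≥
      56 / 15 * ∑ j ∈ Finset.univ.erase i,
        (|γ j| / ‖x i - x j‖ + |γc j| / ‖x i - y j‖) := by
  set m := univ.inf' hne fun j => |γc j|
  set d := (univ.erase i).inf' hne' fun j => ‖x i - x j‖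
  set M := univ.sup' hne fun j => max |γc j| |γ j|
  have hyi0 : 0 < ‖x i - y i‖ := norm_pos_iff.2 (sub_ne_zero.2 hyi.symm)
  obtain ⟨⟨hm, hd⟩, -⟩ : (m ≠ 0 ∧ d ≠ 0) ∧ _ := by
    simpa only [hR, div_ne_zero_iff, mul_ne_zero_iff] using (hyi0.trans_le h1).ne'
  have hd0 : 0 < d := (le_inf' _ _ fun j _ => norm_nonneg _).lt_of_ne' hd
  have hM : 0 ≤ M := le_sup'_of_le _ (mem_univ i) ((abs_nonneg _).trans (le_max_left _ _))
  have hsum := sum_div_add_div_le (univ.erase i) hM hd0 (by norm_num : (0 : ℝ) < 7 / 8)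
    (fun j _ => le_sup'_of_le _ (mem_univ j) (le_max_right _ _))
    (fun j _ => le_sup'_of_le _ (mem_univ j) (le_max_left _ _)) (fun j hj => inf'_le _ hj) h2
  rw [Fin.cast_card_univ_erase] at hsum
  calc |γc i| / ‖x i - y i‖ ≥ m / R := div_le_div₀ (abs_nonneg _) (inf'_le _ (mem_univ i)) hyi0 h1
    _ = 56 / 15 * ((N - 1) * ((1 + (7 / 8)⁻¹) * (M / d))) := by rw [hR]; field_simp; ring
    _ ≥ _ := by gcongr

open Finset in
theorem stmt_5 (N : ℕ) (hN : 2 ≤ N) (x y : Fin N → E2) (hx : Function.Injective x)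
    (γ γc : Fin N → ℝ) (hγ : ∀ j, γ j ≠ 0) (hγc : ∀ j, γc j ≠ 0)
    (i : Fin N)
    (hne : Finset.univ.Nonempty (α := Fin N))
    (hne' : (Finset.univ.erase i).Nonempty)
    (hyi : y i ≠ x i)
    (R : ℝ)
    (hR : R = ((Finset.univ.inf' hne fun j => |γc j|) *
        ((Finset.univ.erase i).inf' hne' fun j => ‖x i - x j‖)) /
        (8 * (N - 1 : ℝ) * (Finset.univ.sup' hne fun j => max |γc j| |γ j|)))
    (h1 : ‖x i - y i‖ ≤ R)
    (h2 : ∀ j ∈ Finset.univ.erase i, ‖x i - y j‖ ≥ 7 / 8 * ‖x i - x j‖) :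
    |γc i| / ‖x i - y i‖ ≥
      56 / 15 * ∑ j ∈ Finset.univ.erase i,
        (|γ j| / ‖x i - x j‖ + |γc j| / ‖x i - y j‖) :=
  stmt_5_general N x y γ γc i hne hne' hyi R hR h1 h2
end
end

section
/- Let x₀, x_f ∈ ℝ², T > 0, γ ≠ 0, and let Γ(t) = x₀ + (t/T)(x_f − x₀) and y(t) = Γ(t) + γ Γ'(t)^⊥/|Γ'(t)|² for t ∈ [0,T], where x₀ ≠ x_f. Then Γ solves the ODE Γ'(t) = γ (Γ(t) − y(t))^⊥ / |Γ(t) − y(t)|² on [0,T], and for all t, |Γ(t) − y(t)| = γT/|x_f − x₀| (taking γ > 0) and |y(t) − y(0)| ≤ |x_f − x₀|. -/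
/-!
The straight segment `Γ` has constant velocity `v = (xf - x₀) / T`, and the controller `y` sits at
the constant offset `Γ - y = -(γ / ‖v‖²) v^⊥`. Since `perp` is an isometry with `perp ∘ perp = -id`,
the field induced at that offset is `(γ / ‖Γ - y‖²) (γ / ‖v‖²) v = v`, with `‖Γ - y‖ = γ / ‖v‖`;
and `y` moves parallel to `Γ`, so it travels at most `‖xf - x₀‖` on `[0, T]`.
-/

noncomputable section

@[simp] lemma perp_apply_zero (w : E2) : perp w 0 = -w 1 := rfl

@[simp] lemma perp_apply_one (w : E2) : perp w 1 = w 0 := rfl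

@[simp] lemma norm_perp (w : E2) : ‖perp w‖ = ‖w‖ := by
  simp only [EuclideanSpace.norm_eq, Fin.sum_univ_two, perp_apply_zero, perp_apply_one,
    Real.norm_eq_abs, sq_abs, neg_sq, add_comm]

lemma perp_smul (c : ℝ) (w : E2) : perp (c • w) = c • perp w := by
  ext i
  fin_cases i <;> simp

@[simp] lemma perp_neg (w : E2) : perp (-w) = -perp w := by
  ext i
  fin_cases i <;> simp

@[simp] lemma perp_perp (w : E2) : perp (perp w) = -w := by
  ext i
  fin_cases i <;> simp

lemma norm_smul_perp_div_norm_sq (c : ℝ) {v : E2} (hv : v ≠ 0) :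
    ‖(c / ‖v‖ ^ 2) • perp v‖ = |c| / ‖v‖ := by
  have hv' : ‖v‖ ≠ 0 := norm_ne_zero_iff.mpr hv
  rw [norm_smul, norm_perp, Real.norm_eq_abs, abs_div, abs_pow, abs_norm]
  field_simp

lemma vortex_field_neg_smul_perp {γ : ℝ} (hγ : γ ≠ 0) {v : E2} (hv : v ≠ 0) :
    (γ / ‖-(γ / ‖v‖ ^ 2) • perp v‖ ^ 2) • perp (-(γ / ‖v‖ ^ 2) • perp v) = v := by
  have hv' : ‖v‖ ≠ 0 := norm_ne_zero_iff.mpr hv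
  rw [neg_smul, norm_neg, norm_smul_perp_div_norm_sq _ hv, perp_neg, perp_smul, perp_perp,
    smul_neg, smul_neg, smul_neg, neg_neg, smul_smul, div_pow, sq_abs]
  convert one_smul ℝ v using 2
  field_simp

theorem stmt_8 (x₀ xf : E2) (hne : xf ≠ x₀) (T γ : ℝ) (hT : 0 < T) (hγ : 0 < γ)
    (Γ y : ℝ → E2)
    (hΓ : ∀ t, Γ t = x₀ + (t / T) • (xf - x₀))
    (hy : ∀ t, y t = Γ t + (γ / ‖(1 / T) • (xf - x₀)‖ ^ 2) • perp ((1 / T) • (xf - x₀))) :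
    (∀ t ∈ Set.Icc (0 : ℝ) T,
      HasDerivAt Γ ((γ / ‖Γ t - y t‖ ^ 2) • perp (Γ t - y t)) t) ∧
    (∀ t ∈ Set.Icc (0 : ℝ) T, ‖Γ t - y t‖ = γ * T / ‖xf - x₀‖) ∧
    (∀ t ∈ Set.Icc (0 : ℝ) T, ‖y t - y 0‖ ≤ ‖xf - x₀‖) := by
  set v : E2 := (1 / T) • (xf - x₀)
  have hv : v ≠ 0 := smul_ne_zero (by positivity) (sub_ne_zero.mpr hne)
  have hnorm_v : ‖v‖ = ‖xf - x₀‖ / T := by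
    rw [norm_smul, Real.norm_of_nonneg (by positivity), one_div_mul_eq_div]
  have hoffset : ∀ t, Γ t - y t = -(γ / ‖v‖ ^ 2) • perp v := fun t => by
    rw [hy t, sub_add_cancel_left, neg_smul]
  have hΓ_deriv : ∀ t, HasDerivAt Γ v t := fun t => by
    rw [funext hΓ]
    simpa [v, one_div] using (((hasDerivAt_id t).div_const T).smul_const (xf - x₀)).const_add x₀
  refine ⟨fun t _ => ?_, fun t _ => ?_, fun t ht => ?_⟩
  · rw [hoffset t, vortex_field_neg_smul_perp hγ.ne' hv]
    exact hΓ_deriv t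
  · rw [hoffset t, neg_smul, norm_neg, norm_smul_perp_div_norm_sq _ hv, abs_of_pos hγ, hnorm_v,
      div_div_eq_mul_div]
  · have hdisp : y t - y 0 = (t / T) • (xf - x₀) := by
      rw [hy t, hy 0, hΓ t, hΓ 0]
      simp
    rw [hdisp, norm_smul, Real.norm_of_nonneg (div_nonneg ht.1 hT.le)]
    exact mul_le_of_le_one_left (norm_nonneg _) ((div_le_one hT).mpr ht.2)
end
end

section
/- Let x₀, x_f ∈ ℝ², γ ≠ 0, y₀ ∈ ℝ² with y₀ ≠ x₀, and T > 0. Then there exists y ∈ C^∞([0,T], ℝ²) with y(0) = y₀ such that the solution x of x'(t) = γ (x(t)−y(t))^⊥/|x(t)−y(t)|², x(0) = x₀, is defined on all of [0,T], satisfies min_{t∈[0,T]} |x(t) − y(t)| > 0, and x(T) = x_f. -/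
noncomputable section

namespace Stmt10Aux
open Complex

lemma exists_ab (m : ℂ) : ∃ a b : ℂ, m + a + b = 1 ∧
    ∀ s : ℝ, m + a * Complex.exp (s * I) + b * Complex.exp (s * I) ^ 2 ≠ 0 := by
  by_cases hm : m.re = 1/2
  · refine ⟨1, -m, by ring, fun s hs => ?_⟩
    have hEF : Complex.exp (↑s * I) * Complex.exp (-(↑s * I)) = 1 := by
      rw [← Complex.exp_add]; simp
    have h3 : m * Complex.exp (-(↑s * I)) + 1 - m * Complex.exp (↑s * I) = 0 := by
      linear_combination Complex.exp (-(↑s * I)) * hs + (m * Complex.exp (↑s * I) - 1) * hEF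
    have hneg : -(↑s * I) = ((-s : ℝ) : ℂ) * I := by push_cast; ring
    rw [hneg, Complex.exp_mul_I, Complex.exp_mul_I, ← Complex.ofReal_cos, ← Complex.ofReal_sin,
      ← Complex.ofReal_cos, ← Complex.ofReal_sin, Real.cos_neg, Real.sin_neg,
      Complex.ofReal_neg] at h3
    have h4 : 2 * m * (Real.sin s : ℂ) * I = 1 := by linear_combination -h3
    have h5 := congrArg Complex.im h4
    have h6 := congrArg Complex.re h4
    simp [Complex.mul_im, Complex.mul_re, hm] at h5 h6
    rw [h5] at h6
    simp at h6
  · refine ⟨1 - m, 0, by ring, fun s hs => ?_⟩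
    have h : m = (m - 1) * Complex.exp (s * I) := by linear_combination hs
    have h2 := congrArg Norm.norm h
    rw [norm_mul, Complex.norm_exp_ofReal_mul_I, mul_one] at h2
    have h3 : Complex.normSq m = Complex.normSq (m - 1) := by
      have := congrArg (· ^ 2) h2
      simpa [Complex.sq_norm] using this
    rw [Complex.normSq_apply, Complex.normSq_apply] at h3
    simp only [Complex.sub_re, Complex.sub_im, Complex.one_re, Complex.one_im] at h3
    apply hm
    nlinarith [h3]


lemma hasDerivAt_cexp_mul (c : ℂ) (t : ℝ) :
    HasDerivAt (fun t : ℝ => Complex.exp (c * t)) (c * Complex.exp (c * t)) t := by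
  have hlin : HasDerivAt (fun z : ℂ => c * z) (c * 1) (t : ℂ) := (hasDerivAt_id (t : ℂ)).const_mul c
  have h := ((Complex.hasDerivAt_exp (c * t)).comp (t : ℂ) hlin).comp_ofReal
  simpa [mul_comm] using h

lemma hasDerivAt_coe (t : ℝ) : HasDerivAt (fun t : ℝ => (t : ℂ)) 1 t := by
  simpa using (hasDerivAt_id t).ofReal_comp


theorem complex_main (x₀ xf y₀ : ℂ) (hy₀ : y₀ ≠ x₀) (γ : ℝ) (hγ : γ ≠ 0)
    (T : ℝ) (hT : 0 < T) :
    ∃ y : ℝ → ℂ, ContDiff ℝ (⊤ : ℕ∞) y ∧ y 0 = y₀ ∧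
      ∃ x : ℝ → ℂ, x 0 = x₀ ∧
        (∀ t : ℝ, HasDerivAt x ((γ / ‖x t - y t‖ ^ 2) • (Complex.I * (x t - y t))) t) ∧
        (∃ ε > 0, ∀ t : ℝ, ε ≤ ‖x t - y t‖) ∧ x T = xf := by
  have hv₀ : x₀ - y₀ ≠ 0 := sub_ne_zero.mpr hy₀.symm
  set v₀ : ℂ := x₀ - y₀ with hv₀def
  have hcv₀ : (starRingEnd ℂ) v₀ ≠ 0 := by simpa using hv₀
  set d₀ : ℂ := Complex.I * γ / (starRingEnd ℂ) v₀ with hd₀def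
  have hd₀ : d₀ ≠ 0 := by
    apply div_ne_zero _ hcv₀
    exact mul_ne_zero Complex.I_ne_zero (Complex.ofReal_ne_zero.mpr hγ)
  set m : ℂ := (xf - x₀) / (d₀ * T) with hmdef
  obtain ⟨a, b, hab, hg0⟩ := exists_ab m
  set ω : ℝ := 2 * Real.pi / T with hωdef
  have hω : (0 : ℝ) < ω := by positivity
  set c : ℂ := (ω : ℂ) * I with hcdef
  have hc : c ≠ 0 := mul_ne_zero (Complex.ofReal_ne_zero.mpr hω.ne') Complex.I_ne_zero
  set E : ℝ → ℂ := fun t => Complex.exp (c * t) with hEdef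
  have hEs : ∀ t : ℝ, E t = Complex.exp ((ω * t : ℝ) * I) := by
    intro t; simp only [hEdef, hcdef]; push_cast; ring_nf
  set g : ℝ → ℂ := fun t => m + a * E t + b * E t ^ 2 with hgdef
  have hgne : ∀ t, g t ≠ 0 := by
    intro t; simp only [hgdef, hEs]; exact hg0 (ω * t)
  have hE0 : E 0 = 1 := by simp [hEdef]
  have hET : E T = 1 := by
    rw [hEs, show ω * T = 2 * Real.pi by rw [hωdef]; field_simp]
    push_cast
    exact Complex.exp_two_pi_mul_I
  have hg0' : g 0 = 1 := by simp [hgdef, hE0]; linear_combination hab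
  have hE' : ∀ t, HasDerivAt E (c * E t) t := fun t => hasDerivAt_cexp_mul c t
  have hEabs : ∀ t, ‖E t‖ = 1 := by
    intro t; rw [hEs]; exact Complex.norm_exp_ofReal_mul_I _
  set G : ℝ → ℂ := fun t => m * t + a / c * (E t - 1) + b / (2 * c) * (E t ^ 2 - 1) with hGdef
  have hG' : ∀ t, HasDerivAt G (g t) t := by
    intro t
    have h1 : HasDerivAt (fun t : ℝ => m * (t : ℂ)) (m * 1) t := (hasDerivAt_coe t).const_mul m
    have h2 : HasDerivAt (fun t : ℝ => a / c * (E t - 1)) (a / c * (c * E t)) t :=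
      (((hE' t).sub_const 1).const_mul _)
    have h3 : HasDerivAt (fun t : ℝ => b / (2 * c) * (E t ^ 2 - 1))
        (b / (2 * c) * (c * E t * E t + E t * (c * E t))) t := by
      have hmul := ((hE' t).mul (hE' t)).sub_const 1
      simpa only [pow_two, Pi.mul_apply] using hmul.const_mul (b / (2 * c))
    have := (h1.add h2).add h3
    convert this using 1
    show m + a * E t + b * E t ^ 2 = _
    field_simp
    ring
    all_goals rfl
  set x : ℝ → ℂ := fun t => x₀ + d₀ * G t with hxdef
  have hx' : ∀ t, HasDerivAt x (d₀ * g t) t := fun t => ((hG' t).const_mul d₀).const_add x₀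
  set y : ℝ → ℂ := fun t => x t - v₀ / (starRingEnd ℂ) (g t) with hydef
  have hxy : ∀ t, x t - y t = v₀ / (starRingEnd ℂ) (g t) := by intro t; simp [hydef]
  have hcg : ∀ t, (starRingEnd ℂ) (g t) ≠ 0 := by intro t; simpa using hgne t
  -- the key algebraic identity
  have key : ∀ t, ((γ / ‖x t - y t‖ ^ 2 : ℝ)) • (Complex.I * (x t - y t)) = d₀ * g t := by
    intro t
    rw [hxy]
    have hgt := hgne t
    have hcgt := hcg t
    rw [Complex.real_smul]
    have hnorm : ‖v₀ / (starRingEnd ℂ) (g t)‖ ^ 2 = Complex.normSq v₀ / Complex.normSq (g t) := by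
      rw [norm_div, div_pow, Complex.sq_norm,
        Complex.sq_norm, Complex.normSq_conj]
    rw [hnorm, hd₀def, Complex.ofReal_div, Complex.ofReal_div, ← Complex.mul_conj,
      ← Complex.mul_conj]
    field_simp
  refine ⟨y, ?_, ?_, x, ?_, ?_, ?_, ?_⟩
  · -- smoothness
    have hcoe : ContDiff ℝ (⊤ : ℕ∞) (fun t : ℝ => (t : ℂ)) := Complex.ofRealCLM.contDiff
    have hEc : ContDiff ℝ (⊤ : ℕ∞) E := Complex.contDiff_exp.comp (contDiff_const.mul hcoe)
    have hgc : ContDiff ℝ (⊤ : ℕ∞) g := by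
      have : ContDiff ℝ (⊤ : ℕ∞) (fun t : ℝ => m + a * E t + b * (E t * E t)) :=
        (contDiff_const.add (contDiff_const.mul hEc)).add (contDiff_const.mul (hEc.mul hEc))
      simpa only [hgdef, pow_two] using this
    have hGc : ContDiff ℝ (⊤ : ℕ∞) G := by
      have : ContDiff ℝ (⊤ : ℕ∞) (fun t : ℝ => m * (t : ℂ) + a / c * (E t - 1)
          + b / (2 * c) * (E t * E t - 1)) :=
        ((contDiff_const.mul hcoe).add (contDiff_const.mul (hEc.sub contDiff_const))).add
          (contDiff_const.mul ((hEc.mul hEc).sub contDiff_const))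
      simpa only [hGdef, pow_two] using this
    have hxc : ContDiff ℝ (⊤ : ℕ∞) x := contDiff_const.add (contDiff_const.mul hGc)
    have hconj : ContDiff ℝ (⊤ : ℕ∞) (fun t => (starRingEnd ℂ) (g t)) :=
      Complex.conjCLE.contDiff.comp hgc
    have hinv : ContDiff ℝ (⊤ : ℕ∞) (fun t => ((starRingEnd ℂ) (g t))⁻¹) := hconj.inv hcg
    have hyy : y = fun t => x t - v₀ * ((starRingEnd ℂ) (g t))⁻¹ := by
      funext t; simp [hydef, div_eq_mul_inv]
    rw [hyy]
    exact hxc.sub (contDiff_const.mul hinv)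
  · simp [hydef, hxdef, hGdef, hg0', hE0, hv₀def]
  · simp [hxdef, hGdef, hE0]
  · intro t; rw [key t]; exact hx' t
  · refine ⟨‖v₀‖ / (‖m‖ + ‖a‖ + ‖b‖), ?_, ?_⟩
    · have hB : (1 : ℝ) ≤ ‖m‖ + ‖a‖ + ‖b‖ := by
        have h1 := norm_add_le (m + a) b
        have h2 := norm_add_le m a
        rw [hab] at h1
        simp only [norm_one] at h1
        linarith
      have h0 : 0 < ‖v₀‖ := norm_pos_iff.mpr hv₀
      positivity
    · intro t
      rw [hxy, norm_div v₀, Complex.norm_conj]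
      have hgt : 0 < ‖g t‖ := norm_pos_iff.mpr (hgne t)
      have hle : ‖g t‖ ≤ ‖m‖ + ‖a‖ + ‖b‖ := by
        have h1 := norm_add_le (m + a * E t) (b * E t ^ 2)
        have h2 := norm_add_le m (a * E t)
        simp only [norm_mul, norm_pow, hEabs t, one_pow, mul_one] at h1 h2
        simp only [hgdef]
        linarith
      gcongr
  · have : G T = m * T := by simp [hGdef, hET]
    rw [hxdef]
    simp only [this, hmdef]
    have hTne : (T : ℂ) ≠ 0 := Complex.ofReal_ne_zero.mpr hT.ne'
    field_simp
    ring


open Complex in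
lemma perp_repr (z : ℂ) :
    perp (Complex.orthonormalBasisOneI.repr z)
      = Complex.orthonormalBasisOneI.repr (Complex.I * z) := by
  have h1 := Complex.orthonormalBasisOneI_repr_apply z
  have h2 := Complex.orthonormalBasisOneI_repr_apply (Complex.I * z)
  ext j
  fin_cases j <;>
    simp [perp, h1, h2, Complex.mul_re, Complex.mul_im]

theorem stmt_10' (x₀ xf y₀ : E2) (hy₀ : y₀ ≠ x₀) (γ : ℝ) (hγ : γ ≠ 0)
    (T : ℝ) (hT : 0 < T)
    (cm : ∀ x₀ xf y₀ : ℂ, y₀ ≠ x₀ →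
      ∃ y : ℝ → ℂ, ContDiff ℝ (⊤ : ℕ∞) y ∧ y 0 = y₀ ∧
      ∃ x : ℝ → ℂ, x 0 = x₀ ∧
        (∀ t : ℝ, HasDerivAt x ((γ / ‖x t - y t‖ ^ 2) • (Complex.I * (x t - y t))) t) ∧
        (∃ ε > 0, ∀ t : ℝ, ε ≤ ‖x t - y t‖) ∧ x T = xf) :
    ∃ y : ℝ → E2, ContDiffOn ℝ (⊤ : ℕ∞) y (Set.Icc 0 T) ∧ y 0 = y₀ ∧
      ∃ x : ℝ → E2, x 0 = x₀ ∧
        (∀ t ∈ Set.Icc (0 : ℝ) T,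
          HasDerivAt x ((γ / ‖x t - y t‖ ^ 2) • perp (x t - y t)) t) ∧
        (∃ ε > 0, ∀ t ∈ Set.Icc (0 : ℝ) T, ε ≤ ‖x t - y t‖) ∧
        x T = xf := by
  set e := Complex.orthonormalBasisOneI.repr with he
  have hy₀' : e.symm y₀ ≠ e.symm x₀ := fun h => hy₀ (e.symm.injective h)
  obtain ⟨yc, hysm, hy0, xc, hx0, hode, ⟨ε, hε, hεle⟩, hxT⟩ :=
    cm (e.symm x₀) (e.symm xf) (e.symm y₀) hy₀'
  refine ⟨fun t => e (yc t), ?_, ?_, fun t => e (xc t), ?_, ?_, ⟨ε, hε, ?_⟩, ?_⟩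
  · exact ((e.toContinuousLinearEquiv.toContinuousLinearMap.contDiff).comp hysm).contDiffOn
  · show e (yc 0) = y₀
    rw [hy0]; exact e.apply_symm_apply y₀
  · show e (xc 0) = x₀
    rw [hx0]; exact e.apply_symm_apply x₀
  · intro t _
    have hD : HasDerivAt (fun t => e (xc t))
        (e ((γ / ‖xc t - yc t‖ ^ 2) • (Complex.I * (xc t - yc t)))) t :=
      e.toContinuousLinearEquiv.toContinuousLinearMap.hasFDerivAt.comp_hasDerivAt t (hode t)
    have hrw : (γ / ‖e (xc t) - e (yc t)‖ ^ 2) • perp (e (xc t) - e (yc t))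
        = e ((γ / ‖xc t - yc t‖ ^ 2) • (Complex.I * (xc t - yc t))) := by
      rw [← map_sub, e.norm_map, perp_repr, map_smul]
    show HasDerivAt (fun t => e (xc t))
      ((γ / ‖e (xc t) - e (yc t)‖ ^ 2) • perp (e (xc t) - e (yc t))) t
    rw [hrw]
    exact hD
  · intro t _
    calc ε ≤ ‖xc t - yc t‖ := hεle t
    _ = ‖e (xc t) - e (yc t)‖ := by rw [← map_sub, e.norm_map]
  · show e (xc T) = xf
    rw [hxT]; exact e.apply_symm_apply xf

end Stmt10Aux

/-- Exact controllability of a single vortex by a single control vortex. -/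
theorem stmt_10 (x₀ xf y₀ : E2) (hy₀ : y₀ ≠ x₀) (γ : ℝ) (hγ : γ ≠ 0)
    (T : ℝ) (hT : 0 < T) :
    ∃ y : ℝ → E2, ContDiffOn ℝ (⊤ : ℕ∞) y (Set.Icc 0 T) ∧ y 0 = y₀ ∧
      ∃ x : ℝ → E2, x 0 = x₀ ∧
        (∀ t ∈ Set.Icc (0 : ℝ) T,
          HasDerivAt x ((γ / ‖x t - y t‖ ^ 2) • perp (x t - y t)) t) ∧
        (∃ ε > 0, ∀ t ∈ Set.Icc (0 : ℝ) T, ε ≤ ‖x t - y t‖) ∧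
        x T = xf := by
  exact Stmt10Aux.stmt_10' x₀ xf y₀ hy₀ γ hγ T hT
    (fun a b c h => Stmt10Aux.complex_main a b c h γ hγ T hT)
end
end

section
/- Let u : ℝ → E be a function of bounded variation with values in a normed space E, and τ > 0. Then ∫_ℝ ‖u(t+τ) − u(t)‖ dt ≤ τ · TV(u), where TV(u) is the total variation of u. -/
/-!
Cut ℝ into the translates `kτ + (0, τ]`, `k ∈ ℤ`, of a fundamental domain of `τℤ`. Then
the integral is at most `∫_{(0, τ]} ∑_k ‖u(x + (k+1)τ) - u(x + kτ)‖ dx`, and for each fixed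
`x` the inner sum is a variation sum of `u` along the increasing sequence `x + kτ`, hence at
most `TV(u)`. Exchanging sum and integral only needs superadditivity of the lower integral,
so no measurability enters.
-/

open MeasureTheory Finset
open scoped ENNReal

lemma sum_lintegral_le_lintegral_sum {α ι : Type*} [MeasurableSpace α] (μ : Measure α)
    (s : Finset ι) (f : ι → α → ℝ≥0∞) :
    ∑ i ∈ s, ∫⁻ x, f i x ∂μ ≤ ∫⁻ x, ∑ i ∈ s, f i x ∂μ := by
  classical
  induction s using Finset.induction_on with
  | empty => simp
  | insert a s ha ih =>
    simp only [sum_insert ha]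
    exact (add_le_add_right ih _).trans (le_lintegral_add _ _)

lemma tsum_lintegral_le_lintegral_tsum {α ι : Type*} [MeasurableSpace α] (μ : Measure α)
    (f : ι → α → ℝ≥0∞) :
    ∑' i, ∫⁻ x, f i x ∂μ ≤ ∫⁻ x, ∑' i, f i x ∂μ := by
  rw [ENNReal.tsum_eq_iSup_sum]
  exact iSup_le fun s => (sum_lintegral_le_lintegral_sum μ s f).trans
    (lintegral_mono fun x => ENNReal.sum_le_tsum s)

theorem eVariationOn.sum_le_of_monotone_int {α E : Type*} [LinearOrder α] [PseudoEMetricSpace E]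
    {f : α → E} {s : Set α} {φ : ℤ → α} (hφ : Monotone φ) (hφs : ∀ k, φ k ∈ s)
    (K : Finset ℤ) :
    ∑ k ∈ K, edist (f (φ (k + 1))) (f (φ k)) ≤ eVariationOn f s := by
  set N := K.sup Int.natAbs
  have hK : K ⊆ (range (2 * N + 1)).image fun i : ℕ => (i : ℤ) - N := by
    intro k hk
    have : k.natAbs ≤ N := le_sup (f := Int.natAbs) hk
    exact mem_image.2 ⟨(k + N).toNat, mem_range.2 (by omega), by omega⟩
  calc ∑ k ∈ K, edist (f (φ (k + 1))) (f (φ k))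
      ≤ ∑ k ∈ (range (2 * N + 1)).image fun i : ℕ => (i : ℤ) - N,
          edist (f (φ (k + 1))) (f (φ k)) := sum_le_sum_of_subset hK
    _ = ∑ i ∈ range (2 * N + 1), edist (f (φ ((i + 1 : ℕ) - N))) (f (φ (i - N))) := by
      rw [sum_image fun i _ j _ h => by omega]
      refine sum_congr rfl fun i _ => ?_
      congr 3
      omega
    _ ≤ eVariationOn f s :=
      eVariationOn.sum_le (u := fun i : ℕ => φ (i - N)) (fun i j hij => hφ (by omega))
        fun i => hφs _

theorem tsum_nnnorm_shift_sub_le_eVariationOn {E : Type*} [SeminormedAddCommGroup E]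
    (u : ℝ → E) {τ : ℝ} (hτ : 0 ≤ τ) (x : ℝ) :
    ∑' k : ℤ, (‖u (k • τ + x + τ) - u (k • τ + x)‖₊ : ℝ≥0∞) ≤
      eVariationOn u Set.univ := by
  have hφ : Monotone fun k : ℤ => k • τ + x := fun i j hij => by
    simpa using zsmul_le_zsmul_left hτ hij
  rw [ENNReal.tsum_eq_iSup_sum]
  refine iSup_le fun K => le_of_eq_of_le (sum_congr rfl fun k _ => ?_)
    (eVariationOn.sum_le_of_monotone_int hφ (fun _ => Set.mem_univ _) K)
  rw [edist_nndist, nndist_eq_nnnorm, add_zsmul, one_zsmul, add_right_comm]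

theorem stmt_11_general {E : Type*} [NormedAddCommGroup E] (u : ℝ → E) (τ : ℝ) (hτ : 0 < τ) :
    ∫⁻ t, (‖u (t + τ) - u t‖₊ : ENNReal) ∂volume ≤
      ENNReal.ofReal τ * eVariationOn u Set.univ := by
  set g : ℝ → ℝ≥0∞ := fun t => ‖u (t + τ) - u t‖₊
  have hsurj : Function.Surjective fun k : ℤ =>
      (⟨k • τ, AddSubgroup.zsmul_mem_zmultiples τ k⟩ : AddSubgroup.zmultiples τ) := by
    rintro ⟨_, k, rfl⟩
    exact ⟨k, rfl⟩
  calc ∫⁻ t, g t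
      = ∑' γ : AddSubgroup.zmultiples τ, ∫⁻ x in Set.Ioc 0 (0 + τ), g (γ +ᵥ x) :=
        (isAddFundamentalDomain_Ioc hτ 0).lintegral_eq_tsum'' g
    _ ≤ ∫⁻ x in Set.Ioc 0 (0 + τ), ∑' γ : AddSubgroup.zmultiples τ, g (γ +ᵥ x) :=
        tsum_lintegral_le_lintegral_tsum _ _
    _ ≤ ∫⁻ x in Set.Ioc 0 (0 + τ), ∑' k : ℤ, g (k • τ + x) :=
        lintegral_mono fun x => ENNReal.tsum_le_tsum_comp_of_surjective hsurj _
    _ ≤ ∫⁻ _ in Set.Ioc 0 (0 + τ), eVariationOn u Set.univ :=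
        lintegral_mono (tsum_nnnorm_shift_sub_le_eVariationOn u hτ.le)
    _ = ENNReal.ofReal τ * eVariationOn u Set.univ := by
        rw [setLIntegral_const, zero_add, Real.volume_Ioc, sub_zero, mul_comm]

theorem stmt_11 {E : Type*} [NormedAddCommGroup E] (u : ℝ → E) (τ : ℝ) (hτ : 0 < τ)
    (hBV : BoundedVariationOn u Set.univ) :
    ∫⁻ t, (‖u (t + τ) - u t‖₊ : ENNReal) ∂volume ≤
      ENNReal.ofReal τ * eVariationOn u Set.univ :=
  stmt_11_general u τ hτ
end

section
/- Let (y_k)_{k=1}^N be continuous functions [0,T] → ℝ² and for n ∈ ℕ* define z_n : [0,T] → ℝ² piecewise by z_n(t) = y_k(t) when t lies in the k-th of N equal subintervals of the i-th of n equal subintervals of [0,T]. Then for every continuous bounded φ : [0,T] × ℝ² → ℝ that is Lipschitz in both variables, ∫₀^T φ(t, z_n(t)) dt → (1/N) Σ_{k=1}^N ∫₀^T φ(t, y_k(t)) dt as n → ∞. -/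
/-!
On the `i`-th of the `n` big cells `[i T/n, (i+1) T/n]` every integrand `t ↦ φ (t, y_k t)` is
within `ε` of its value at the left end, as soon as `T/n` is below a common modulus of uniform
continuity on `[0, T]` (the Lipschitz bound makes `φ` jointly continuous). So its integral over
the `k`-th subcell, of length `h = T/(nN)`, is `1/N` of its integral over the big cell up to
`2εh`. There are `nN` subcells, and `z_n` follows `y_{j mod N}` on the `j`-th one, so the
total error is at most `2εT`.
-/

noncomputable section

/-- The oscillating control: on the `k`-th of the `N` equal subintervals of each of
the `n` equal subintervals of `[0,T]`, it follows `y k`. -/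
def zosc (N : ℕ) (hN : 0 < N) (T : ℝ) (y : Fin N → ℝ → E2) (n : ℕ) (t : ℝ) : E2 :=
  y ⟨(⌊t * (n * N : ℕ) / T⌋).toNat % N, Nat.mod_lt _ hN⟩ t

open Filter Topology Set MeasureTheory

theorem Finset.sum_range_mul_eq_sum_sum {M : Type*} [AddCommMonoid M] (F : ℕ → M) (n N : ℕ) :
    ∑ j ∈ range (n * N), F j = ∑ i ∈ range n, ∑ k ∈ range N, F (i * N + k) := by
  induction n with
  | zero => simp
  | succ n ih => rw [sum_range_succ, ← ih, Nat.succ_mul, sum_range_add]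

theorem continuous_uncurry_of_abs_sub_le {E : Type*} [SeminormedAddCommGroup E]
    {φ : ℝ → E → ℝ} {L : ℝ} (hφ : ∀ t t' p p', |φ t p - φ t' p'| ≤ L * (|t - t'| + ‖p - p'‖)) :
    Continuous (Function.uncurry φ) := by
  refine (LipschitzWith.of_dist_le_mul fun q q' => ?_ :
    LipschitzWith (2 * L).toNNReal _).continuous
  have h1 : |q.1 - q'.1| ≤ dist q q' := by
    rw [Prod.dist_eq, ← Real.dist_eq]; exact le_max_left _ _
  have h2 : ‖q.2 - q'.2‖ ≤ dist q q' := by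
    rw [Prod.dist_eq, ← dist_eq_norm]; exact le_max_right _ _
  have hL : 0 ≤ L := by simpa using (abs_nonneg _).trans (hφ 1 0 q.2 q.2)
  rw [Real.dist_eq, Real.coe_toNNReal _ (by positivity)]
  change |φ q.1 q.2 - φ q'.1 q'.2| ≤ _
  nlinarith [hφ q.1 q'.1 q.2 q'.2]

theorem exists_forall_abs_sub_le_of_continuous (f : ℕ → ℝ → ℝ) (hf : ∀ j, Continuous (f j))
    (N : ℕ) (a b : ℝ) {ε : ℝ} (hε : 0 < ε) :
    ∃ δ > 0, ∀ k < N, ∀ s ∈ Icc a b, ∀ t ∈ Icc a b, |s - t| ≤ δ → |f k s - f k t| ≤ ε := by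
  have hF : Continuous fun p : ℕ × ℝ => f p.1 p.2 := continuous_prod_of_discrete_left.2 hf
  obtain ⟨δ, hδ, hmod⟩ := Metric.uniformContinuousOn_iff_le.1
    (((finite_Iio N).isCompact.prod isCompact_Icc).uniformContinuousOn_of_continuous
      hF.continuousOn) ε hε
  refine ⟨δ, hδ, fun k hk s hs t ht hst => ?_⟩
  simpa [Real.dist_eq] using
    hmod (k, s) ⟨hk, hs⟩ (k, t) ⟨hk, ht⟩ (by simpa [Prod.dist_eq, Real.dist_eq] using hst)

theorem integral_eq_sum_of_eqOn_Ioo {E : Type*} [NormedAddCommGroup E] [NormedSpace ℝ E]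
    {G : ℝ → E} {F : ℕ → ℝ → E} {x : ℕ → ℝ} {M : ℕ} (hx : Monotone x)
    (hF : ∀ j < M, IntervalIntegrable (F j) volume (x j) (x (j + 1)))
    (hG : ∀ j < M, EqOn G (F j) (Ioo (x j) (x (j + 1)))) :
    ∫ t in x 0..x M, G t = ∑ j ∈ Finset.range M, ∫ t in x j..x (j + 1), F j t := by
  have hcell : ∀ j < M, EqOn G (F j) (uIoo (x j) (x (j + 1))) := fun j hj =>
    uIoo_of_le (hx j.le_succ) ▸ hG j hj
  rw [← intervalIntegral.sum_integral_adjacent_intervals fun j hj =>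
    (hF j hj).congr_uIoo (hcell j hj).symm]
  exact Finset.sum_congr rfl fun j hj =>
    intervalIntegral.integral_congr_uIoo (hcell j (Finset.mem_range.1 hj))

theorem integral_eq_sum_integral_uniform_partition {g : ℝ → ℝ} (hg : Continuous g) (c : ℝ)
    (n : ℕ) : ∫ t in (0 : ℝ)..n * c, g t = ∑ i ∈ Finset.range n, ∫ t in i * c..i * c + c, g t := by
  have := intervalIntegral.sum_integral_adjacent_intervals (a := fun i : ℕ => i * c) (n := n)
    fun i _ => hg.intervalIntegrable (μ := volume) _ _
  simp only [Nat.cast_succ, add_mul, one_mul, Nat.cast_zero, zero_mul] at this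
  exact this.symm

theorem abs_integral_sub_mul_le {g : ℝ → ℝ} {a b c ε : ℝ} (hg : IntervalIntegrable g volume a b)
    (hab : a ≤ b) (hgc : ∀ t ∈ Icc a b, |g t - c| ≤ ε) :
    |(∫ t in a..b, g t) - (b - a) * c| ≤ ε * (b - a) := by
  have hsub : (∫ t in a..b, g t) - (b - a) * c = ∫ t in a..b, (g t - c) := by
    rw [intervalIntegral.integral_sub hg intervalIntegrable_const, intervalIntegral.integral_const,
      smul_eq_mul]
  rw [hsub, ← abs_of_nonneg (sub_nonneg.2 hab)]
  exact intervalIntegral.norm_integral_le_of_norm_le_const fun t ht =>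
    (Real.norm_eq_abs _).trans_le (hgc t (Ioc_subset_Icc_self (uIoc_of_le hab ▸ ht)))

theorem abs_integral_sub_average_le {g : ℝ → ℝ} {a h ε : ℝ} {N k : ℕ} (hg : Continuous g)
    (hh : 0 ≤ h) (hk : k < N) (hosc : ∀ t ∈ Icc a (a + N * h), |g t - g a| ≤ ε) :
    |(∫ t in a + k * h..a + (k + 1) * h, g t) - (1 / N) * ∫ t in a..a + N * h, g t|
      ≤ 2 * ε * h := by
  have hk1 : (k : ℝ) + 1 ≤ N := by exact_mod_cast hk
  have hN : (0 : ℝ) < N := by linarith [(k.cast_nonneg : (0 : ℝ) ≤ k)]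
  have hsmall := abs_integral_sub_mul_le (a := a + k * h) (b := a + (k + 1) * h) (c := g a)
    (hg.intervalIntegrable _ _) (by nlinarith) fun t ht =>
      hosc t ⟨by nlinarith [ht.1, k.cast_nonneg (α := ℝ)], by nlinarith [ht.2]⟩
  have hbig := abs_integral_sub_mul_le (a := a) (b := a + N * h) (c := g a)
    (hg.intervalIntegrable _ _) (by nlinarith) hosc
  have hsplit : (∫ t in a + k * h..a + (k + 1) * h, g t) - (1 / N) * ∫ t in a..a + N * h, g t
      = ((∫ t in a + k * h..a + (k + 1) * h, g t) - (a + (k + 1) * h - (a + k * h)) * g a)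
        - (1 / N) * ((∫ t in a..a + N * h, g t) - (a + N * h - a) * g a) := by
    field_simp
    ring
  rw [hsplit]
  calc _ ≤ ε * (a + (k + 1) * h - (a + k * h)) + (1 / N) * (ε * (a + N * h - a)) := by
        refine (abs_sub _ _).trans (add_le_add hsmall ?_)
        rw [abs_mul, abs_of_pos (by positivity)]
        gcongr
    _ = 2 * ε * h := by field_simp; ring

theorem sum_integral_periodic_eq_sum_sum {f : ℕ → ℝ → ℝ} {N : ℕ} (hper : Function.Periodic f N)
    (n : ℕ) (h : ℝ) :
    ∑ j ∈ Finset.range (n * N), (∫ t in j * h..(j + 1) * h, f j t)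
      = ∑ i ∈ Finset.range n, ∑ k ∈ Finset.range N,
          ∫ t in i * (N * h) + k * h..i * (N * h) + (k + 1) * h, f k t := by
  rw [Finset.sum_range_mul_eq_sum_sum]
  refine Finset.sum_congr rfl fun i _ => Finset.sum_congr rfl fun k _ => ?_
  have hfk : f (i * N + k) = f k := by simpa [add_comm] using hper.nat_mul i k
  rw [hfk]
  congr 1 <;> push_cast <;> ring

theorem abs_sum_integral_periodic_sub_average_le {f : ℕ → ℝ → ℝ} {N : ℕ} (hN : 0 < N)
    (hper : Function.Periodic f N) (hf : ∀ j, Continuous (f j)) {T ε δ : ℝ} (hT : 0 ≤ T)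
    (hmod : ∀ k < N, ∀ s ∈ Icc 0 T, ∀ t ∈ Icc 0 T, |s - t| ≤ δ → |f k s - f k t| ≤ ε)
    {n : ℕ} (hn : 0 < n) (hnδ : T / n ≤ δ) :
    |∑ j ∈ Finset.range (n * N), (∫ t in j * (T / (n * N : ℕ))..(j + 1) * (T / (n * N : ℕ)), f j t)
      - (1 / N) * ∑ k ∈ Finset.range N, ∫ t in (0 : ℝ)..T, f k t| ≤ 2 * ε * T := by
  set h := T / (n * N : ℕ) with h_def
  have hh : 0 ≤ h := by positivity
  have hnNh : n * (N * h) = T := by rw [h_def]; push_cast; field_simp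
  have hNh : N * h ≤ δ := by
    refine le_trans (le_of_eq ?_) hnδ
    rw [eq_div_iff (by positivity), mul_comm, hnNh]
  have hcell : ∀ i < n, ∀ k < N,
      |(∫ t in i * (N * h) + k * h..i * (N * h) + (k + 1) * h, f k t)
        - (1 / N) * ∫ t in i * (N * h)..i * (N * h) + N * h, f k t| ≤ 2 * ε * h := by
    intro i hi k hk
    have hi1 : (i : ℝ) + 1 ≤ n := by exact_mod_cast hi
    refine abs_integral_sub_average_le (hf k) hh hk fun t ht => hmod k hk t ?_ _ ?_ ?_
    · have := ht.1; have := ht.2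
      constructor <;> nlinarith
    · constructor <;> nlinarith
    · rw [abs_of_nonneg (by linarith [ht.1])]
      linarith [ht.2]
  simp_rw [sum_integral_periodic_eq_sum_sum hper, ← hnNh,
    integral_eq_sum_integral_uniform_partition (hf _), Finset.mul_sum]
  rw [Finset.sum_comm (s := Finset.range N), ← Finset.sum_sub_distrib]
  simp_rw [← Finset.sum_sub_distrib]
  calc _ ≤ ∑ i ∈ Finset.range n, ∑ k ∈ Finset.range N, 2 * ε * h :=
        (Finset.abs_sum_le_sum_abs _ _).trans <| Finset.sum_le_sum fun i hi =>
          (Finset.abs_sum_le_sum_abs _ _).trans <| Finset.sum_le_sum fun k hk =>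
            hcell i (Finset.mem_range.1 hi) k (Finset.mem_range.1 hk)
    _ = 2 * ε * (n * (N * h)) := by
        simp only [Finset.sum_const, Finset.card_range, nsmul_eq_mul]; ring

theorem tendsto_sum_integral_periodic {f : ℕ → ℝ → ℝ} {N : ℕ} (hN : 0 < N)
    (hper : Function.Periodic f N) (hf : ∀ j, Continuous (f j)) {T : ℝ} (hT : 0 < T) :
    Tendsto (fun n : ℕ => ∑ j ∈ Finset.range (n * N),
        ∫ t in j * (T / (n * N : ℕ))..(j + 1) * (T / (n * N : ℕ)), f j t) atTop
      (𝓝 ((1 / N) * ∑ k ∈ Finset.range N, ∫ t in (0 : ℝ)..T, f k t)) := by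
  refine Metric.tendsto_atTop.2 fun ε hε => ?_
  obtain ⟨δ, hδ, hmod⟩ :=
    exists_forall_abs_sub_le_of_continuous f hf N 0 T (ε := ε / (4 * T)) (by positivity)
  obtain ⟨n₀, hn₀⟩ := exists_nat_gt (T / δ)
  refine ⟨n₀, fun n hn => ?_⟩
  have hn : T / δ < n := hn₀.trans_le (by exact_mod_cast hn)
  have hnpos : (0 : ℝ) < n := (div_pos hT hδ).trans hn
  rw [Real.dist_eq]
  calc _ ≤ 2 * (ε / (4 * T)) * T :=
        abs_sum_integral_periodic_sub_average_le hN hper hf hT.le hmod (by exact_mod_cast hnpos)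
          ((div_le_iff₀ hnpos).2 (by rw [div_lt_iff₀ hδ] at hn; linarith))
    _ < ε := by field_simp; linarith

theorem floor_mul_div_eq_of_mem_Ico {t T M : ℝ} {j : ℕ} (hT : 0 < T) (hM : 0 < M)
    (ht : t ∈ Ico (j * (T / M)) ((j + 1) * (T / M))) : ⌊t * M / T⌋ = j := by
  rw [Int.floor_eq_iff, le_div_iff₀ hT, div_lt_iff₀ hT]
  have h1 := ht.1
  have h2 := ht.2
  rw [← mul_div_assoc, div_le_iff₀ hM] at h1
  rw [← mul_div_assoc, lt_div_iff₀ hM] at h2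
  push_cast
  constructor <;> linarith

theorem zosc_eq_of_mem_Ico {N : ℕ} (hN : 0 < N) {T : ℝ} (hT : 0 < T) (y : Fin N → ℝ → E2)
    {n j : ℕ} (hn : 0 < n) {t : ℝ}
    (ht : t ∈ Ico (j * (T / (n * N : ℕ))) ((j + 1) * (T / (n * N : ℕ)))) :
    zosc N hN T y n t = y ⟨j % N, Nat.mod_lt _ hN⟩ t := by
  simp only [zosc, floor_mul_div_eq_of_mem_Ico hT (by positivity) ht, Int.toNat_natCast]

theorem integral_zosc_eq_sum {N : ℕ} (hN : 0 < N) {T : ℝ} (hT : 0 < T) (y : Fin N → ℝ → E2)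
    {φ : ℝ → E2 → ℝ} (hφy : ∀ k, Continuous fun t => φ t (y k t)) {n : ℕ} (hn : 0 < n) :
    ∫ t in (0 : ℝ)..T, φ t (zosc N hN T y n t)
      = ∑ j ∈ Finset.range (n * N), ∫ t in j * (T / (n * N : ℕ))..(j + 1) * (T / (n * N : ℕ)),
          φ t (y ⟨j % N, Nat.mod_lt _ hN⟩ t) := by
  have hM : (0 : ℝ) < (n * N : ℕ) := by positivity
  have hcells := integral_eq_sum_of_eqOn_Ioo (G := fun t => φ t (zosc N hN T y n t))
    (F := fun j t => φ t (y ⟨j % N, Nat.mod_lt _ hN⟩ t))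
    (x := fun j : ℕ => j * (T / (n * N : ℕ))) (M := n * N)
    (fun a b hab => mul_le_mul_of_nonneg_right (by exact_mod_cast hab) (by positivity))
    (fun j _ => (hφy _).intervalIntegrable _ _)
    (fun j _ t ht => by
      simp only [zosc_eq_of_mem_Ico hN hT y hn (by exact_mod_cast Ioo_subset_Ico_self ht)])
  simpa only [Nat.cast_zero, zero_mul, mul_div_cancel₀ T hM.ne', Nat.cast_succ] using hcells

open Filter in
theorem stmt_19_general (N : ℕ) (hN : 0 < N) (T : ℝ) (hT : 0 < T)
    (y : Fin N → ℝ → E2) (hy : ∀ k, Continuous (y k))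
    (φ : ℝ → E2 → ℝ)
    (hLip : ∃ Lφ : ℝ, ∀ t t' : ℝ, ∀ p p' : E2,
      |φ t p - φ t' p'| ≤ Lφ * (|t - t'| + ‖p - p'‖)) :
    Tendsto (fun n : ℕ => ∫ t in (0 : ℝ)..T, φ t (zosc N hN T y n t)) atTop
      (nhds ((1 / (N : ℝ)) * ∑ k : Fin N, ∫ t in (0 : ℝ)..T, φ t (y k t))) := by
  obtain ⟨L, hL⟩ := hLip
  have hφy : ∀ k, Continuous fun t => φ t (y k t) := fun k =>
    (continuous_uncurry_of_abs_sub_le hL).comp (continuous_id.prodMk (hy k))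
  set f : ℕ → ℝ → ℝ := fun j t => φ t (y ⟨j % N, Nat.mod_lt _ hN⟩ t) with hf_def
  have hper : Function.Periodic f N := fun j => by simp [hf_def]
  have hlim : ∑ k : Fin N, ∫ t in (0 : ℝ)..T, φ t (y k t)
      = ∑ k ∈ Finset.range N, ∫ t in (0 : ℝ)..T, f k t := by
    rw [← Fin.sum_univ_eq_sum_range]
    simp [hf_def, Nat.mod_eq_of_lt]
  rw [hlim]
  exact (tendsto_sum_integral_periodic hN hper (fun j => hφy _) hT).congr'
    ((eventually_gt_atTop 0).mono fun n hn => (integral_zosc_eq_sum hN hT y hφy hn).symm)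

open Filter in
theorem stmt_19 (N : ℕ) (hN : 0 < N) (T : ℝ) (hT : 0 < T)
    (y : Fin N → ℝ → E2) (hy : ∀ k, Continuous (y k))
    (φ : ℝ → E2 → ℝ)
    (hbdd : ∃ C : ℝ, ∀ t p, |φ t p| ≤ C)
    (hLip : ∃ Lφ : ℝ, ∀ t t' : ℝ, ∀ p p' : E2,
      |φ t p - φ t' p'| ≤ Lφ * (|t - t'| + ‖p - p'‖)) :
    Tendsto (fun n : ℕ => ∫ t in (0 : ℝ)..T, φ t (zosc N hN T y n t)) atTop
      (nhds ((1 / (N : ℝ)) * ∑ k : Fin N, ∫ t in (0 : ℝ)..T, φ t (y k t))) :=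
  stmt_19_general N hN T hT y hy φ hLip
end
end
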